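/- Assume β̄ > 0. For every ε > 0 and every x = (x₁,x₂) with 0 < x₂ < 1, the fast-variable horizontal average of the first-order full boundary-layer approximation equals the first-order averaged wall-law solution: (1/(2πε)) ∫₀^{2πε} u^{∞,1}_ε(x₁+s, x₂) ds = u¹(x), where u¹(x) = −(C/2)(x₂² − x₂/(1+εβ̄) − εβ̄/(1+εβ̄)). In particular the horizontal average over one period of β(·, y₂) equals β̄ for every y₂ ≥ 0. -/

import Mathlib

open MeasureTheory Real Set

noncomputable section

/-- Partial derivative in the first variable. -/
def pd1 (u : ℝ → ℝ → ℝ) (x y : ℝ) : ℝ := deriv (fun t => u t y) x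

/-- Partial derivative in the second variable. -/
def pd2 (u : ℝ → ℝ → ℝ) (x y : ℝ) : ℝ := deriv (fun t => u x t) y

/-- Laplacian. -/
def lap (u : ℝ → ℝ → ℝ) (x y : ℝ) : ℝ := pd1 (pd1 u) x y + pd2 (pd2 u) x y

/-- Squared modulus of the gradient. -/
def gradSq (u : ℝ → ℝ → ℝ) (x y : ℝ) : ℝ := (pd1 u x y) ^ 2 + (pd2 u x y) ^ 2

/-- The rough domain Ω^ε. -/
def OmegaEps (f : ℝ → ℝ) (L ε : ℝ) : Set (ℝ × ℝ) :=
  {p | 0 < p.1 ∧ p.1 < L ∧ ε * f (p.1 / ε) < p.2 ∧ p.2 < 1}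

/-- The smooth domain Ω⁰. -/
def Omega0 (L : ℝ) : Set (ℝ × ℝ) := Ioo 0 L ×ˢ Ioo (0 : ℝ) 1

/-- The periodic rough strip. -/
def RoughStrip (f : ℝ → ℝ) (ε : ℝ) : Set (ℝ × ℝ) :=
  {p | ε * f (p.1 / ε) < p.2 ∧ p.2 < 1}

/-- A classical solution of the rough problem `-Δu = C` in `Ω^ε`, `u = 0` on `Γ^ε ∪ Γ¹`,
periodic in `x₁`, with finite Dirichlet energy. -/
structure RoughSolution (f : ℝ → ℝ) (L C ε : ℝ) (u : ℝ → ℝ → ℝ) : Prop where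
  cont : ContinuousOn (fun p : ℝ × ℝ => u p.1 p.2) (closure (OmegaEps f L ε))
  periodic : ∀ x y, u (x + L) y = u x y
  smooth : ContDiffOn ℝ 2 (fun p : ℝ × ℝ => u p.1 p.2) (RoughStrip f ε)
  eqn : ∀ p ∈ OmegaEps f L ε, -(lap u p.1 p.2) = C
  bc_rough : ∀ x, u x (ε * f (x / ε)) = 0
  bc_top : ∀ x, u x 1 = 0
  energy : IntegrableOn (fun p : ℝ × ℝ => gradSq u p.1 p.2) (OmegaEps f L ε)

/-- The zeroth order approximation `u^{0,1}`: Poiseuille profile, linearly extended below. -/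
def u01 (C : ℝ) (x y : ℝ) : ℝ := if 0 ≤ y then C / 2 * (1 - y) * y else C / 2 * y

/-- A classical solution of a cell problem: harmonic above the rough boundary
`{y₂ = f(y₁)}`, `2π`-periodic in `y₁`, with boundary value `g` on the rough boundary and
finite Dirichlet energy over one period. -/
structure CellSolution (f : ℝ → ℝ) (g : ℝ → ℝ) (β : ℝ → ℝ → ℝ) : Prop where
  cont : ContinuousOn (fun p : ℝ × ℝ => β p.1 p.2) {p : ℝ × ℝ | f p.1 ≤ p.2}
  periodic : ∀ y₁ y₂, β (y₁ + 2 * π) y₂ = β y₁ y₂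
  smooth : ContDiffOn ℝ 2 (fun p : ℝ × ℝ => β p.1 p.2) {p : ℝ × ℝ | f p.1 < p.2}
  harmonic : ∀ p : ℝ × ℝ, f p.1 < p.2 → lap β p.1 p.2 = 0
  bc : ∀ t, β t (f t) = g t
  energy : IntegrableOn (fun p : ℝ × ℝ => gradSq β p.1 p.2)
    {p : ℝ × ℝ | 0 < p.1 ∧ p.1 < 2 * π ∧ f p.1 < p.2}

/-- The average on the fictitious interface `Γ = {y₂ = 0}`. -/
def interfaceAvg (β : ℝ → ℝ → ℝ) : ℝ := (1 / (2 * π)) * ∫ t in (0 : ℝ)..(2 * π), β t 0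

/-- The first-order full boundary-layer approximation
`u^{∞,1}_ε = u^{0,1} + (ε/(1+εβ̄)) (C/2) (β(x/ε) − β̄ x₂)`. -/
def uFull1 (C ε βbar : ℝ) (β : ℝ → ℝ → ℝ) (x y : ℝ) : ℝ :=
  u01 C x y + (ε / (1 + ε * βbar)) * (C / 2) * (β (x / ε) (y / ε) - βbar * y)


/-!
Differentiating under the integral sign, the period integral `G(y) = ∫₀^{2π} β(t, y) dt` has
derivative `b(y) = ∫₀^{2π} ∂₂β(t, y) dt`, and `b' = ∫ ∂₂²β = -∫ ∂₁²β = 0` by harmonicity and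
periodicity, so `b` is a constant `c` on the half-plane `y > -δ`, which lies in the fluid domain.
By Cauchy–Schwarz each slice carries `∫₀^{2π} (∂₂β)² ≥ c² / 2π`, so finite Dirichlet energy
forces `c = 0` and `G` is constant. The average of `u^{∞,1}_ε` over one fast period then follows
from the substitution `t = (x₁ + s) / ε`.
-/

open intervalIntegral

section PartialDerivatives

variable {u : ℝ → ℝ → ℝ} {s : Set (ℝ × ℝ)} {m n : WithTop ℕ∞} {x y : ℝ}

lemma hasDerivAt_fderiv_fst (hu : DifferentiableAt ℝ (fun p : ℝ × ℝ => u p.1 p.2) (x, y)) :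
    HasDerivAt (fun t => u t y) (fderiv ℝ (fun p : ℝ × ℝ => u p.1 p.2) (x, y) (1, 0)) x :=
  hu.hasFDerivAt.comp_hasDerivAt (f := fun t => (t, y)) x
    ((hasDerivAt_id x).prodMk (hasDerivAt_const x y))

lemma hasDerivAt_fderiv_snd (hu : DifferentiableAt ℝ (fun p : ℝ × ℝ => u p.1 p.2) (x, y)) :
    HasDerivAt (fun t => u x t) (fderiv ℝ (fun p : ℝ × ℝ => u p.1 p.2) (x, y) (0, 1)) y :=
  hu.hasFDerivAt.comp_hasDerivAt (f := fun t => (x, t)) y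
    ((hasDerivAt_const y x).prodMk (hasDerivAt_id y))

lemma differentiableAt_of_contDiffOn (hs : IsOpen s)
    (hu : ContDiffOn ℝ n (fun p : ℝ × ℝ => u p.1 p.2) s) (hn : n ≠ 0) (hp : (x, y) ∈ s) :
    DifferentiableAt ℝ (fun p : ℝ × ℝ => u p.1 p.2) (x, y) :=
  (hu.contDiffAt (hs.mem_nhds hp)).differentiableAt hn

lemma hasDerivAt_pd1 (hs : IsOpen s) (hu : ContDiffOn ℝ n (fun p : ℝ × ℝ => u p.1 p.2) s)
    (hn : n ≠ 0) (hp : (x, y) ∈ s) : HasDerivAt (fun t => u t y) (pd1 u x y) x :=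
  (hasDerivAt_fderiv_fst (differentiableAt_of_contDiffOn hs hu hn hp)).differentiableAt.hasDerivAt

lemma hasDerivAt_pd2 (hs : IsOpen s) (hu : ContDiffOn ℝ n (fun p : ℝ × ℝ => u p.1 p.2) s)
    (hn : n ≠ 0) (hp : (x, y) ∈ s) : HasDerivAt (fun t => u x t) (pd2 u x y) y :=
  (hasDerivAt_fderiv_snd (differentiableAt_of_contDiffOn hs hu hn hp)).differentiableAt.hasDerivAt

lemma contDiffOn_pd1 (hs : IsOpen s) (hu : ContDiffOn ℝ n (fun p : ℝ × ℝ => u p.1 p.2) s)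
    (hmn : m + 1 ≤ n) : ContDiffOn ℝ m (fun p : ℝ × ℝ => pd1 u p.1 p.2) s :=
  ((hu.fderiv_of_isOpen hs hmn).clm_apply contDiffOn_const).congr fun p hp =>
    (hasDerivAt_fderiv_fst (differentiableAt_of_contDiffOn hs hu
      (ne_bot_of_le_ne_bot (by simp) hmn) hp)).deriv

lemma contDiffOn_pd2 (hs : IsOpen s) (hu : ContDiffOn ℝ n (fun p : ℝ × ℝ => u p.1 p.2) s)
    (hmn : m + 1 ≤ n) : ContDiffOn ℝ m (fun p : ℝ × ℝ => pd2 u p.1 p.2) s :=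
  ((hu.fderiv_of_isOpen hs hmn).clm_apply contDiffOn_const).congr fun p hp =>
    (hasDerivAt_fderiv_snd (differentiableAt_of_contDiffOn hs hu
      (ne_bot_of_le_ne_bot (by simp) hmn) hp)).deriv

lemma pd1_add_of_periodic {T : ℝ} (hu : ∀ x y, u (x + T) y = u x y) (x y : ℝ) :
    pd1 u (x + T) y = pd1 u x y := by
  simp only [pd1, ← deriv_comp_add_const, hu]

end PartialDerivatives

section HorizontalIntegrals

variable {φ φ' : ℝ × ℝ → ℝ} {a : ℝ}

lemma isOpen_setOf_lt_snd (a : ℝ) : IsOpen {p : ℝ × ℝ | a < p.2} :=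
  isOpen_lt continuous_const continuous_snd

lemma continuous_slice_of_continuousOn (hφ : ContinuousOn φ {p | a < p.2}) {y : ℝ} (hy : a < y) :
    Continuous fun t => φ (t, y) :=
  hφ.comp_continuous (by fun_prop) fun _ => hy

lemma hasDerivAt_intervalIntegral_slice (hφ : ContinuousOn φ {p | a < p.2})
    (hφ' : ContinuousOn φ' {p | a < p.2})
    (hd : ∀ t y, a < y → HasDerivAt (fun y => φ (t, y)) (φ' (t, y)) y)
    (l r : ℝ) {y₀ : ℝ} (hy₀ : a < y₀) :
    HasDerivAt (fun y => ∫ t in l..r, φ (t, y)) (∫ t in l..r, φ' (t, y₀)) y₀ := by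
  set ρ := (y₀ - a) / 2
  have hρ : 0 < ρ := by simp only [ρ]; linarith
  have hball : ∀ y ∈ Metric.closedBall y₀ ρ, a < y := fun y hy => by
    have := (abs_le.1 (Real.dist_eq y y₀ ▸ Metric.mem_closedBall.1 hy)).1
    simp only [ρ] at this; linarith
  obtain ⟨M, hM⟩ := (isCompact_uIcc.prod (isCompact_closedBall y₀ ρ)).exists_bound_of_continuousOn
    (hφ'.mono fun p hp => hball p.2 hp.2)
  refine (hasDerivAt_integral_of_dominated_loc_of_deriv_le (F := fun y t => φ (t, y))
    (F' := fun y t => φ' (t, y)) (bound := fun _ => M) (Metric.closedBall_mem_nhds y₀ hρ) ?_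
    ((continuous_slice_of_continuousOn hφ hy₀).intervalIntegrable l r)
    (continuous_slice_of_continuousOn hφ' hy₀).aestronglyMeasurable ?_ intervalIntegrable_const
    ?_).2
  · filter_upwards [Metric.closedBall_mem_nhds y₀ hρ] with y hy
    exact (continuous_slice_of_continuousOn hφ (hball y hy)).aestronglyMeasurable
  · exact .of_forall fun t ht y hy => hM (t, y) ⟨uIoc_subset_uIcc ht, hy⟩
  · exact .of_forall fun t _ y hy => hd t y (hball y hy)

end HorizontalIntegrals

lemma sq_intervalIntegral_div_le {g : ℝ → ℝ} {l r : ℝ} (hlr : l < r) (hg : Continuous g) :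
    (∫ t in l..r, g t) ^ 2 / (r - l) ≤ ∫ t in l..r, g t ^ 2 := by
  set c := ∫ t in l..r, g t
  set m := c / (r - l)
  have hrl : r - l ≠ 0 := sub_ne_zero.2 hlr.ne'
  have hg2 : IntervalIntegrable (fun t => g t ^ 2) volume l r := (hg.pow 2).intervalIntegrable l r
  have hgm : IntervalIntegrable (fun t => 2 * m * g t) volume l r :=
    (continuous_const.mul hg).intervalIntegrable l r
  have hvar : 0 ≤ ∫ t in l..r, (g t - m) ^ 2 :=
    integral_nonneg hlr.le fun t _ => sq_nonneg _
  have hexpand : ∫ t in l..r, (g t - m) ^ 2 = (∫ t in l..r, g t ^ 2) - c ^ 2 / (r - l) := by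
    simp_rw [show ∀ t, (g t - m) ^ 2 = g t ^ 2 - 2 * m * g t + m ^ 2 from fun t => by ring]
    rw [integral_add (hg2.sub hgm) intervalIntegrable_const, integral_sub hg2 hgm,
      intervalIntegral.integral_const_mul, intervalIntegral.integral_const, smul_eq_mul]
    simp only [m]
    field_simp
    ring
  linarith

lemma eq_zero_of_intervalIntegral_slice_eq {w : ℝ × ℝ → ℝ} {a l r c : ℝ} (hlr : l < r)
    (hw : ∀ y, a < y → Continuous fun t => w (t, y))
    (hint : IntegrableOn (fun p => w p ^ 2) (Ioo l r ×ˢ Ioi a))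
    (hc : ∀ y, a < y → ∫ t in l..r, w (t, y) = c) : c = 0 := by
  have hslices : IntegrableOn (fun y => ∫ t in Ioo l r, w (t, y) ^ 2) (Ioi a) := by
    rw [IntegrableOn, Measure.volume_eq_prod, ← Measure.prod_restrict] at hint
    exact hint.integral_prod_right
  have hbound : ∀ y ∈ Ioi a, c ^ 2 / (r - l) ≤ ∫ t in Ioo l r, w (t, y) ^ 2 := fun y hy => by
    rw [← integral_Ioc_eq_integral_Ioo, ← integral_of_le hlr.le, ← hc y hy]
    exact sq_intervalIntegral_div_le hlr (hw y hy)
  have hconst : IntegrableOn (fun _ => c ^ 2 / (r - l)) (Ioi a) := by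
    refine hslices.mono' aestronglyMeasurable_const ((ae_restrict_iff' measurableSet_Ioi).2 ?_)
    refine .of_forall fun y hy => ?_
    rw [Real.norm_of_nonneg (div_nonneg (sq_nonneg c) (sub_pos.2 hlr).le)]
    exact hbound y hy
  rcases integrable_const_iff.1 hconst with hzero | hfinite
  · simpa [(sub_pos.2 hlr).ne'] using hzero
  · simpa using hfinite.measure_univ_lt_top

lemma eq_of_hasDerivAt_zero_on_Ioi {g : ℝ → ℝ} {a : ℝ} (hg : ∀ y, a < y → HasDerivAt g 0 y)
    {y y' : ℝ} (hy : a < y) (hy' : a < y') : g y = g y' :=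
  isOpen_Ioi.is_const_of_deriv_eq_zero isPreconnected_Ioi
    (fun z hz => (hg z hz).differentiableAt.differentiableWithinAt) (fun z hz => (hg z hz).deriv)
    hy hy'

section PeriodicHarmonic

variable {β : ℝ → ℝ → ℝ} {a T : ℝ}
  (hβ : ContDiffOn ℝ 2 (fun p : ℝ × ℝ => β p.1 p.2) {p | a < p.2})
  (hlap : ∀ p : ℝ × ℝ, a < p.2 → lap β p.1 p.2 = 0) (hper : ∀ x y, β (x + T) y = β x y)
include hβ

lemma hasDerivAt_integral_slice {y : ℝ} (hy : a < y) :
    HasDerivAt (fun y => ∫ t in 0..T, β t y) (∫ t in 0..T, pd2 β t y) y :=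
  hasDerivAt_intervalIntegral_slice hβ.continuousOn
    (contDiffOn_pd2 (isOpen_setOf_lt_snd a) hβ (m := 0) (by norm_num)).continuousOn
    (fun _ _ hy => hasDerivAt_pd2 (isOpen_setOf_lt_snd a) hβ two_ne_zero hy) 0 T hy

include hlap hper in
lemma hasDerivAt_integral_pd2_slice {y : ℝ} (hy : a < y) :
    HasDerivAt (fun y => ∫ t in 0..T, pd2 β t y) 0 y := by
  have hH := isOpen_setOf_lt_snd a
  have h1 : ContDiffOn ℝ 1 (fun p : ℝ × ℝ => pd1 β p.1 p.2) _ := contDiffOn_pd1 hH hβ (by norm_num)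
  have h2 : ContDiffOn ℝ 1 (fun p : ℝ × ℝ => pd2 β p.1 p.2) _ := contDiffOn_pd2 hH hβ (by norm_num)
  have hderiv := hasDerivAt_intervalIntegral_slice h2.continuousOn
    (contDiffOn_pd2 hH h2 (m := 0) le_rfl).continuousOn
    (fun _ _ hy => hasDerivAt_pd2 hH h2 one_ne_zero hy) 0 T hy
  have hftc : ∫ t in 0..T, pd1 (pd1 β) t y = pd1 β T y - pd1 β 0 y :=
    integral_eq_sub_of_hasDerivAt (fun _ _ => hasDerivAt_pd1 (u := pd1 β) hH h1 one_ne_zero hy)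
      ((continuous_slice_of_continuousOn
        (contDiffOn_pd1 hH h1 (m := 0) le_rfl).continuousOn hy).intervalIntegrable 0 T)
  have hperiod : pd1 β T y = pd1 β 0 y := by simpa using pd1_add_of_periodic hper 0 y
  convert hderiv using 1
  rw [integral_congr (g := fun t => -pd1 (pd1 β) t y)
      fun t _ => eq_neg_of_add_eq_zero_right (hlap (t, y) hy),
    intervalIntegral.integral_neg, hftc, hperiod, sub_self, neg_zero]

include hlap hper in
theorem integral_slice_eq_of_harmonic_of_periodic (hT : 0 < T)
    (henergy : IntegrableOn (fun p : ℝ × ℝ => pd2 β p.1 p.2 ^ 2) (Ioo 0 T ×ˢ Ioi a))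
    {y y' : ℝ} (hy : a < y) (hy' : a < y') :
    ∫ t in 0..T, β t y = ∫ t in 0..T, β t y' := by
  have hflux : ∀ z, a < z → ∫ t in 0..T, pd2 β t z = 0 := fun z hz =>
    eq_zero_of_intervalIntegral_slice_eq hT
      (fun _ hw => continuous_slice_of_continuousOn
        (contDiffOn_pd2 (isOpen_setOf_lt_snd a) hβ (m := 0) (by norm_num)).continuousOn hw)
      henergy
      fun _ hw => eq_of_hasDerivAt_zero_on_Ioi
        (fun _ hv => hasDerivAt_integral_pd2_slice hβ hlap hper hv) hw hz
  exact eq_of_hasDerivAt_zero_on_Ioi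
    (fun z hz => hflux z hz ▸ hasDerivAt_integral_slice hβ hz) hy hy'

end PeriodicHarmonic

namespace CellSolution

variable {f g : ℝ → ℝ} {β : ℝ → ℝ → ℝ} {a : ℝ} (hβ : CellSolution f g β) (hfa : ∀ t, f t ≤ a)
include hβ hfa

lemma contDiffOn_of_le : ContDiffOn ℝ 2 (fun p : ℝ × ℝ => β p.1 p.2) {p | a < p.2} :=
  hβ.smooth.mono fun p hp => (hfa p.1).trans_lt hp

lemma continuous_slice {y : ℝ} (hy : a < y) : Continuous fun t => β t y :=
  continuous_slice_of_continuousOn (hβ.contDiffOn_of_le hfa).continuousOn hy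

lemma integrableOn_sq_pd2 :
    IntegrableOn (fun p : ℝ × ℝ => pd2 β p.1 p.2 ^ 2) (Ioo 0 (2 * π) ×ˢ Ioi a) := by
  have hmeas : MeasurableSet (Ioo 0 (2 * π) ×ˢ Ioi a) := measurableSet_Ioo.prod measurableSet_Ioi
  have hcont : ContinuousOn (fun p : ℝ × ℝ => pd2 β p.1 p.2 ^ 2) (Ioo 0 (2 * π) ×ˢ Ioi a) :=
    ((contDiffOn_pd2 (isOpen_setOf_lt_snd a) (hβ.contDiffOn_of_le hfa)
      (m := 0) (by norm_num)).continuousOn.pow 2).mono fun p hp => hp.2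
  refine (hβ.energy.mono_set fun p hp => ⟨hp.1.1, hp.1.2, (hfa _).trans_lt hp.2⟩).mono'
    (hcont.aestronglyMeasurable hmeas) ((ae_restrict_iff' hmeas).2 (.of_forall fun p _ => ?_))
  rw [Real.norm_of_nonneg (sq_nonneg _)]
  exact le_add_of_nonneg_left (sq_nonneg _)

theorem integral_slice_eq {y y' : ℝ} (hy : a < y) (hy' : a < y') :
    ∫ t in 0..2 * π, β t y = ∫ t in 0..2 * π, β t y' :=
  integral_slice_eq_of_harmonic_of_periodic (hβ.contDiffOn_of_le hfa)
    (fun p hp => hβ.harmonic p ((hfa _).trans_lt hp)) hβ.periodic two_pi_pos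
    (hβ.integrableOn_sq_pd2 hfa) hy hy'

end CellSolution

lemma Function.Periodic.intervalIntegral_comp_add_div {h : ℝ → ℝ} {T : ℝ}
    (hh : Function.Periodic h T) (x : ℝ) {ε : ℝ} (hε : ε ≠ 0) :
    ∫ s in 0..T * ε, h ((x + s) / ε) = ε * ∫ t in 0..T, h t := by
  rw [intervalIntegral.integral_comp_add_left (fun u => h (u / ε)) x,
    intervalIntegral.integral_comp_div _ hε, smul_eq_mul, add_zero,
    show (x + T * ε) / ε = x / ε + T by field_simp, hh.intervalIntegral_add_eq (x / ε) 0,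
    zero_add]

lemma average_uFull1 {C ε B : ℝ} {β : ℝ → ℝ → ℝ} {x₁ x₂ : ℝ} (hε : 0 < ε) (hx₂ : 0 ≤ x₂)
    (hB : 1 + ε * B ≠ 0) (hper : Function.Periodic (fun t => β t (x₂ / ε)) (2 * π))
    (hcont : Continuous fun t => β t (x₂ / ε))
    (havg : (1 / (2 * π)) * ∫ t in 0..2 * π, β t (x₂ / ε) = B) :
    (1 / (2 * π * ε)) * ∫ s in 0..2 * π * ε, uFull1 C ε B β (x₁ + s) x₂
      = -(C / 2) * (x₂ ^ 2 - x₂ / (1 + ε * B) - ε * B / (1 + ε * B)) := by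
  set k := ε / (1 + ε * B) * (C / 2)
  have hsplit : ∀ s, uFull1 C ε B β (x₁ + s) x₂
      = (C / 2 * (1 - x₂) * x₂ - k * (B * x₂)) + k * β ((x₁ + s) / ε) (x₂ / ε) := fun s => by
    simp only [uFull1, u01, if_pos hx₂, k]
    ring
  have hfast : ∫ s in 0..2 * π * ε, β ((x₁ + s) / ε) (x₂ / ε) = ε * (2 * π * B) := by
    rw [hper.intervalIntegral_comp_add_div x₁ hε.ne', ← havg]
    field_simp
  have hfast_cont : Continuous fun s => β ((x₁ + s) / ε) (x₂ / ε) :=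
    hcont.comp (f := fun s => (x₁ + s) / ε) (by fun_prop)
  simp_rw [hsplit]
  rw [intervalIntegral.integral_add intervalIntegrable_const
      ((hfast_cont.intervalIntegrable _ _).const_mul k),
    intervalIntegral.integral_const, intervalIntegral.integral_const_mul, hfast, smul_eq_mul]
  simp only [k]
  field_simp
  ring

theorem average_of_first_order_full_boundary_layer_general
    (f : ℝ → ℝ) (δ C : ℝ)
    (hδ0 : 0 < δ) (hfb : ∀ t, -1 ≤ f t ∧ f t ≤ -δ)
    (β : ℝ → ℝ → ℝ) (hβ : CellSolution f (fun t => -f t) β)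
    (hβbar : 0 < interfaceAvg β) :
    (∀ ε : ℝ, 0 < ε → ∀ x₁ x₂ : ℝ, 0 < x₂ → x₂ < 1 →
      (1 / (2 * π * ε)) * ∫ s in (0 : ℝ)..(2 * π * ε),
          uFull1 C ε (interfaceAvg β) β (x₁ + s) x₂
        = -(C / 2) * (x₂ ^ 2 - x₂ / (1 + ε * interfaceAvg β)
            - ε * interfaceAvg β / (1 + ε * interfaceAvg β))) ∧
    (∀ y₂ : ℝ, 0 ≤ y₂ →
      (1 / (2 * π)) * ∫ t in (0 : ℝ)..(2 * π), β t y₂ = interfaceAvg β) := by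
  have hfδ : ∀ t, f t ≤ -δ := fun t => (hfb t).2
  have havg : ∀ y₂ : ℝ, 0 ≤ y₂ →
      (1 / (2 * π)) * ∫ t in (0 : ℝ)..(2 * π), β t y₂ = interfaceAvg β := fun y₂ hy₂ => by
    rw [interfaceAvg, hβ.integral_slice_eq hfδ (by linarith) (by linarith : -δ < 0)]
  refine ⟨fun ε hε x₁ x₂ hx₂ _ => ?_, havg⟩
  have hslice : 0 ≤ x₂ / ε := by positivity
  exact average_uFull1 hε hx₂.le (by positivity) (fun t => hβ.periodic t _)
    (hβ.continuous_slice hfδ (by linarith)) (havg _ hslice)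

/-- The fast-variable horizontal average of `u^{∞,1}_ε` equals the first-order averaged
wall-law solution `u¹`; in particular the horizontal average of `β(·,y₂)` over one period
equals `β̄` for every `y₂ ≥ 0`. -/
theorem average_of_first_order_full_boundary_layer
    (f : ℝ → ℝ) (K : NNReal) (δ C : ℝ)
    (hf : LipschitzWith K f) (hper : Function.Periodic f (2 * π))
    (hδ0 : 0 < δ) (hδ1 : δ < 1) (hfb : ∀ t, -1 ≤ f t ∧ f t ≤ -δ)
    (hC : 0 < C)
    (β : ℝ → ℝ → ℝ) (hβ : CellSolution f (fun t => -f t) β)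
    (hβbar : 0 < interfaceAvg β) :
    (∀ ε : ℝ, 0 < ε → ∀ x₁ x₂ : ℝ, 0 < x₂ → x₂ < 1 →
      (1 / (2 * π * ε)) * ∫ s in (0 : ℝ)..(2 * π * ε),
          uFull1 C ε (interfaceAvg β) β (x₁ + s) x₂
        = -(C / 2) * (x₂ ^ 2 - x₂ / (1 + ε * interfaceAvg β)
            - ε * interfaceAvg β / (1 + ε * interfaceAvg β))) ∧
    (∀ y₂ : ℝ, 0 ≤ y₂ →
      (1 / (2 * π)) * ∫ t in (0 : ℝ)..(2 * π), β t y₂ = interfaceAvg β) :=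
  average_of_first_order_full_boundary_layer_general f δ C hδ0 hfb β hβ hβbar

end
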